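/- Let I_F be the principal submatrix of the expected Fisher information matrix I(θ) of the rank-one PCP model obtained by deleting, for each p ∈ {2,…,P}, the row and column indexed by the first coordinate of a_p, so that I_F is a square matrix of order r = (Σ_{p=1}^P N_p) − P + 1. Then I_F is invertible (nonsingular of rank r). -/

import Mathlib

open Finset

noncomputable section

variable {P : ℕ} {N : Fin P → ℕ}

/-- Factor sum `λ_p = Σ_j a_p(j)`. -/
def lam1 (a : (p : Fin P) → Fin (N p) → ℝ) (p : Fin P) : ℝ :=
  ∑ j, a p j

/-- Index set of the parameter vector `θ`: a pair of a mode `p` and a coordinate of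
`a_p`; its cardinality is `Σ_p N_p`. -/
abbrev FullIdx (N : Fin P → ℕ) := (p : Fin P) × Fin (N p)

/-- **Expected Fisher information matrix of the rank-one PCP model**: the symmetric
`(Σ_p N_p) × (Σ_p N_p)` block matrix whose `(p,p)` diagonal block has `(i,j)` entry
`[i = j] · λ/(λ_p a_p(i))` and whose `(p,q)` off-diagonal block (`p ≠ q`) has every
entry equal to `λ/(λ_p λ_q)`, where `λ = λ_1 ⋯ λ_P`. -/
def fim (a : (p : Fin P) → Fin (N p) → ℝ) : Matrix (FullIdx N) (FullIdx N) ℝ :=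
  fun x y =>
    if x = y then (∏ p, lam1 a p) / (lam1 a x.1 * a x.1 x.2)
    else if x.1 = y.1 then 0
    else (∏ p, lam1 a p) / (lam1 a x.1 * lam1 a y.1)

/-- Retained indices: all coordinates of `a_1`, and all but the first coordinate of
each `a_p` for `p ∈ {2,…,P}`. -/
abbrev RetIdx (N : Fin P → ℕ) := {x : FullIdx N // (x.1 : ℕ) = 0 ∨ (x.2 : ℕ) ≠ 0}

/-- Deleted indices: the first coordinate of each `a_p` for `p ∈ {2,…,P}`. -/
abbrev DelIdx (N : Fin P → ℕ) := {x : FullIdx N // ¬((x.1 : ℕ) = 0 ∨ (x.2 : ℕ) ≠ 0)}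

/-- `I_F`: the principal submatrix of `I(θ)` on the retained indices. -/
def fimF (a : (p : Fin P) → Fin (N p) → ℝ) : Matrix (RetIdx N) (RetIdx N) ℝ :=
  fun x y => fim a x.1 y.1

/-- `I_{F,N}`: the deleted rows of `I(θ)` restricted to the retained columns. -/
def fimFN (a : (p : Fin P) → Fin (N p) → ℝ) : Matrix (DelIdx N) (RetIdx N) ℝ :=
  fun x y => fim a x.1 y.1

/-- `I_N`: the principal submatrix of `I(θ)` on the deleted indices. -/
def fimN (a : (p : Fin P) → Fin (N p) → ℝ) : Matrix (DelIdx N) (DelIdx N) ℝ :=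
  fun x y => fim a x.1 y.1

open Matrix

/-!
Writing `t_p = (Σ_i w_p(i)) / λ_p`, the quadratic form of `I(θ)` is the sum of squares
`λ · (Σ_p λ_p⁻¹ Σ_i a_p(i) (w_p(i)/a_p(i) - t_p)² + (Σ_p t_p)²)`,
so it vanishes only on the scaling directions `w_p = t_p a_p` with `Σ_p t_p = 0`.
A vector supported on the retained indices has `w_p(1) = 0`, hence `t_p = 0`, for every
`p ≥ 2`; then `Σ_p t_p = 0` forces `t_1 = 0` too, so `w = 0` and `I_F` is positive definite.
-/

theorem Fintype.sum_sum_ite_fst_eq_sq_sub_sum_sq {ι : Type*} [Fintype ι] [DecidableEq ι]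
    {κ : ι → Type*} [∀ i, Fintype (κ i)] {R : Type*} [CommRing R] (f : (Σ i, κ i) → R) :
    ∑ x, ∑ y, (if x.1 = y.1 then 0 else f x * f y) =
      (∑ i, ∑ j, f ⟨i, j⟩) ^ 2 - ∑ i, (∑ j, f ⟨i, j⟩) ^ 2 := by
  have hdiag :
      ∑ x, ∑ y, (if x.1 = y.1 then f x * f y else 0) = ∑ i, (∑ j, f ⟨i, j⟩) ^ 2 := by
    rw [Fintype.sum_sigma]
    refine Finset.sum_congr rfl fun i _ => ?_
    rw [sq, Finset.sum_mul]
    refine Finset.sum_congr rfl fun j _ => ?_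
    rw [Fintype.sum_sigma, Fintype.sum_eq_single i fun q hq => by simp [Ne.symm hq],
      Finset.mul_sum]
    simp
  have hall : ∑ x, ∑ y, f x * f y = (∑ i, ∑ j, f ⟨i, j⟩) ^ 2 := by
    rw [← Finset.sum_mul_sum, ← sq, Fintype.sum_sigma]
  rw [← hdiag, ← hall, ← Finset.sum_sub_distrib]
  refine Finset.sum_congr rfl fun x _ => ?_
  rw [← Finset.sum_sub_distrib]
  refine Finset.sum_congr rfl fun y _ => ?_
  split_ifs <;> simp

theorem Fintype.sum_mul_div_sub_sq {ι K : Type*} [Fintype ι] [Field K] (a w : ι → K)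
    (ha : ∀ i, a i ≠ 0) (hs : ∑ i, a i ≠ 0) :
    ∑ i, a i * (w i / a i - (∑ j, w j) / ∑ j, a j) ^ 2 =
      ∑ i, w i ^ 2 / a i - (∑ i, w i) ^ 2 / ∑ i, a i := by
  have h (i : ι) : a i * (w i / a i - (∑ j, w j) / ∑ j, a j) ^ 2 =
      w i ^ 2 / a i - 2 * ((∑ j, w j) / ∑ j, a j) * w i +
        ((∑ j, w j) / ∑ j, a j) ^ 2 * a i := by
    have := ha i
    field_simp
    ring
  simp_rw [h, Finset.sum_add_distrib, Finset.sum_sub_distrib, ← Finset.mul_sum]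
  field_simp
  ring

theorem Fintype.eq_mul_of_sum_mul_div_sub_sq_eq_zero {ι K : Type*} [Fintype ι] [Field K]
    [LinearOrder K] [IsStrictOrderedRing K] {a w : ι → K} (ha : ∀ i, 0 < a i) {t : K}
    (h : ∑ i, a i * (w i / a i - t) ^ 2 = 0) (i : ι) : w i = t * a i := by
  have hi := congrFun
    ((Fintype.sum_eq_zero_iff_of_nonneg fun j => mul_nonneg (ha j).le (sq_nonneg _)).1 h) i
  simp only [Pi.zero_apply, mul_eq_zero, (ha i).ne', false_or, pow_eq_zero_iff two_ne_zero,
    sub_eq_zero] at hi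
  rw [← hi, div_mul_cancel₀ _ (ha i).ne']

theorem Fin.card_subtype_val_ne_zero (n : ℕ) :
    Fintype.card {p : Fin n // (p : ℕ) ≠ 0} = n - 1 := by
  cases n with
  | zero => rfl
  | succ n => simp only [Fin.val_eq_zero_iff, Fintype.card_subtype_compl, Fintype.card_unique,
      Fintype.card_fin]

theorem Matrix.dotProduct_submatrix_mulVec_of_eq_zero {ι R : Type*} [Fintype ι] [CommSemiring R]
    (A : Matrix ι ι R) {p : ι → Prop} [DecidablePred p] {w : ι → R}
    (hw : ∀ i, ¬ p i → w i = 0) :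
    (fun j : {i // p i} => w j) ⬝ᵥ
        (A.submatrix Subtype.val Subtype.val *ᵥ fun j : {i // p i} => w j) =
      w ⬝ᵥ (A *ᵥ w) := by
  have hw' (i : {i // ¬ p i}) : w i = 0 := hw i i.2
  simp only [dotProduct, mulVec, ← Fintype.sum_subtype_add_sum_subtype p, hw', zero_mul,
    mul_zero, sum_const_zero, add_zero, submatrix_apply]

section

variable {a : (p : Fin P) → Fin (N p) → ℝ}

lemma lam1_pos {p : Fin P} (hN : 1 ≤ N p) (ha : ∀ j, 0 < a p j) : 0 < lam1 a p :=
  Finset.sum_pos (fun j _ => ha j) ⟨⟨0, hN⟩, mem_univ _⟩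

lemma fim_isSymm (a : (p : Fin P) → Fin (N p) → ℝ) : (fim a).IsSymm := by
  refine Matrix.IsSymm.ext fun x y => ?_
  unfold fim
  by_cases hxy : x = y
  · subst hxy; rfl
  · simp only [hxy, Ne.symm hxy, if_false, eq_comm (a := x.1), mul_comm]

lemma fim_apply_eq (a : (p : Fin P) → Fin (N p) → ℝ) (x y : FullIdx N) :
    fim a x y = (∏ p, lam1 a p) * ((if x = y then (lam1 a x.1 * a x.1 x.2)⁻¹ else 0) +
      if x.1 = y.1 then 0 else (lam1 a x.1)⁻¹ * (lam1 a y.1)⁻¹) := by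
  unfold fim
  by_cases hxy : x = y
  · subst hxy; simp [div_eq_mul_inv]
  · by_cases h1 : x.1 = y.1
    · simp [hxy, h1]
    · simp only [hxy, h1, if_false, zero_add, div_eq_mul_inv, mul_inv]

def blockRatio (a : (p : Fin P) → Fin (N p) → ℝ) (w : FullIdx N → ℝ) (p : Fin P) : ℝ :=
  (∑ j, w ⟨p, j⟩) / lam1 a p

theorem dotProduct_fim_mulVec (hN : ∀ p, 1 ≤ N p) (ha : ∀ p j, 0 < a p j)
    (w : FullIdx N → ℝ) :
    w ⬝ᵥ (fim a *ᵥ w) = (∏ p, lam1 a p) *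
      (∑ p, (∑ i, a p i * (w ⟨p, i⟩ / a p i - blockRatio a w p) ^ 2) / lam1 a p +
        (∑ p, blockRatio a w p) ^ 2) := by
  have hlam (p : Fin P) : lam1 a p ≠ 0 := (lam1_pos (hN p) (ha p)).ne'
  have hblock (p : Fin P) :
      (∑ i, a p i * (w ⟨p, i⟩ / a p i - blockRatio a w p) ^ 2) / lam1 a p =
        (∑ i, w ⟨p, i⟩ ^ 2 / a p i) / lam1 a p - blockRatio a w p ^ 2 := by
    have hs : ∑ i, a p i ≠ 0 := hlam p
    rw [blockRatio, lam1, Fintype.sum_mul_div_sub_sq _ _ (fun i => (ha p i).ne') (hlam p)]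
    field_simp
  calc w ⬝ᵥ (fim a *ᵥ w)
      = (∏ p, lam1 a p) * (∑ x, w x ^ 2 / (lam1 a x.1 * a x.1 x.2) +
          ∑ x, ∑ y, if x.1 = y.1 then 0 else w x / lam1 a x.1 * (w y / lam1 a y.1)) := by
        have hterm (x y : FullIdx N) : w x * (fim a x y * w y) = (∏ p, lam1 a p) *
            ((if x = y then w x ^ 2 / (lam1 a x.1 * a x.1 x.2) else 0) +
              if x.1 = y.1 then 0 else w x / lam1 a x.1 * (w y / lam1 a y.1)) := by
          rw [fim_apply_eq]
          by_cases hxy : x = y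
          · subst hxy
            simp only [if_true, add_zero]
            ring
          · simp only [hxy, if_false, zero_add]
            split_ifs <;> ring
        rw [show w ⬝ᵥ (fim a *ᵥ w) = ∑ x, ∑ y, w x * (fim a x y * w y) by
          simp only [dotProduct, mulVec, Finset.mul_sum]]
        simp_rw [hterm, ← Finset.mul_sum, Finset.sum_add_distrib, Finset.sum_ite_eq,
          if_pos (mem_univ _)]
    _ = (∏ p, lam1 a p) * (∑ p, (∑ i, w ⟨p, i⟩ ^ 2 / a p i) / lam1 a p +
          ((∑ p, blockRatio a w p) ^ 2 - ∑ p, blockRatio a w p ^ 2)) := by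
        rw [Fintype.sum_sum_ite_fst_eq_sq_sub_sum_sq, Fintype.sum_sigma]
        simp only [blockRatio, Finset.sum_div, div_div, mul_comm (a _ _)]
    _ = _ := by
        simp only [hblock, sum_sub_distrib]
        ring

theorem eq_blockRatio_mul_of_dotProduct_fim_mulVec_nonpos (hN : ∀ p, 1 ≤ N p)
    (ha : ∀ p j, 0 < a p j) {w : FullIdx N → ℝ} (h : w ⬝ᵥ (fim a *ᵥ w) ≤ 0) :
    (∀ x, w x = blockRatio a w x.1 * a x.1 x.2) ∧ ∑ p, blockRatio a w p = 0 := by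
  have hS (p : Fin P) :
      0 ≤ (∑ i, a p i * (w ⟨p, i⟩ / a p i - blockRatio a w p) ^ 2) / lam1 a p :=
    div_nonneg (sum_nonneg fun i _ => mul_nonneg (ha p i).le (sq_nonneg _))
      (lam1_pos (hN p) (ha p)).le
  rw [dotProduct_fim_mulVec hN ha] at h
  have hsq := nonpos_of_mul_nonpos_right h (prod_pos fun p _ => lam1_pos (hN p) (ha p))
  obtain ⟨hS0, hT0⟩ := (add_eq_zero_iff_of_nonneg (sum_nonneg fun p _ => hS p) (sq_nonneg _)).1
    (le_antisymm hsq (add_nonneg (sum_nonneg fun p _ => hS p) (sq_nonneg _)))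
  refine ⟨fun ⟨p, i⟩ => ?_, pow_eq_zero_iff two_ne_zero |>.1 hT0⟩
  have hp := congrFun ((Fintype.sum_eq_zero_iff_of_nonneg hS).1 hS0) p
  rw [Pi.zero_apply, div_eq_zero_iff, or_iff_left (lam1_pos (hN p) (ha p)).ne'] at hp
  exact Fintype.eq_mul_of_sum_mul_div_sub_sq_eq_zero (ha p) hp i

theorem fimF_posDef (hN : ∀ p, 1 ≤ N p) (ha : ∀ p j, 0 < a p j) : (fimF a).PosDef := by
  classical
  refine posDef_iff_dotProduct_mulVec.2 ⟨isHermitian_iff_isSymm.2 ((fim_isSymm a).submatrix _),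
    fun v hv => ?_⟩
  set w : FullIdx N → ℝ :=
    fun x => if h : (x.1 : ℕ) = 0 ∨ (x.2 : ℕ) ≠ 0 then v ⟨x, h⟩ else 0
  have hw (x : FullIdx N) (hx : ¬((x.1 : ℕ) = 0 ∨ (x.2 : ℕ) ≠ 0)) : w x = 0 := dif_neg hx
  have hvw : v = fun j : RetIdx N => w j := funext fun j => by simp [w, j.2]
  rw [star_trivial, hvw, show fimF a = (fim a).submatrix Subtype.val Subtype.val from rfl,
    dotProduct_submatrix_mulVec_of_eq_zero _ hw]
  by_contra hle
  obtain ⟨hcoord, hsum⟩ :=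
    eq_blockRatio_mul_of_dotProduct_fim_mulVec_nonpos hN ha (not_lt.1 hle)
  have hdel (p : Fin P) (hp : (p : ℕ) ≠ 0) : blockRatio a w p = 0 := by
    have h0 := hcoord ⟨p, ⟨0, hN p⟩⟩
    rw [hw _ (by simp [hp])] at h0
    exact (mul_eq_zero.1 h0.symm).resolve_right (ha p _).ne'
  have hall (p : Fin P) : blockRatio a w p = 0 := by
    by_cases hp : (p : ℕ) = 0
    · rwa [sum_eq_single p (fun q _ hq => hdel q fun hq0 => hq (Fin.ext (hq0.trans hp.symm)))
        (by simp)] at hsum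
    · exact hdel p hp
  exact hv (hvw.trans (funext fun j => by rw [hcoord, hall, zero_mul, Pi.zero_apply]))

def delIdxEquiv (hN : ∀ p, 1 ≤ N p) : DelIdx N ≃ {p : Fin P // (p : ℕ) ≠ 0} where
  toFun x := ⟨x.1.1, (not_or.1 x.2).1⟩
  invFun p := ⟨⟨p.1, ⟨0, hN p.1⟩⟩, by simp [p.2]⟩
  left_inv := by
    rintro ⟨⟨p, i⟩, hx⟩
    have hi : (i : ℕ) = 0 := not_not.1 (not_or.1 hx).2
    exact Subtype.ext (Sigma.ext rfl (heq_of_eq (Fin.ext hi.symm)))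

theorem card_retIdx_add_card_delIdx :
    Fintype.card (RetIdx N) + Fintype.card (DelIdx N) = ∑ p, N p := by
  rw [← Fintype.card_sum, Fintype.card_congr (Equiv.sumCompl _), Fintype.card_sigma]
  simp

theorem card_retIdx (hP : 0 < P) (hN : ∀ p, 1 ≤ N p) :
    Fintype.card (RetIdx N) = (∑ p, N p) - P + 1 := by
  have hdel : Fintype.card (DelIdx N) = P - 1 := by
    rw [Fintype.card_congr (delIdxEquiv hN), Fin.card_subtype_val_ne_zero]
  have hsum := card_retIdx_add_card_delIdx (N := N)
  have hPle : P ≤ ∑ p, N p := by simpa using sum_le_sum fun p (_ : p ∈ univ) => hN p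
  omega

end

/-- **Nonsingularity of the reduced Fisher information matrix.** The principal
submatrix `I_F` of the expected Fisher information of the rank-one PCP model, obtained
by deleting the row and column of the first coordinate of `a_p` for each
`p ∈ {2,…,P}`, is a square matrix of order `r = (Σ_p N_p) − P + 1` and is invertible
(nonsingular of full rank `r`). -/
theorem stmt_17 (P : ℕ) (hP : 2 ≤ P) (N : Fin P → ℕ) (hN : ∀ p, 1 ≤ N p)
    (a : (p : Fin P) → Fin (N p) → ℝ) (ha : ∀ p j, 0 < a p j) :
    Fintype.card (RetIdx N) = (∑ p, N p) - P + 1 ∧ IsUnit (fimF a) :=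
  ⟨card_retIdx (by omega) hN, (fimF_posDef hN ha).isUnit⟩
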